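/- Let f : ℝ² → Mₙ(ℝ) be infinitely differentiable with f(x,y) invertible for every (x,y), and suppose f satisfies the matrix heat equation ∂_y f = ∂_x² f. Then φ := (∂_x f)·f⁻¹ satisfies the noncommutative Burgers equation ∂_y φ = ∂_x² φ + 2(∂_x φ)·φ. -/

import Mathlib

/-!
Cole–Hopf. Write the hypothesis as `f_x = φ f`. Differentiating it gives
`f_xx = (φ_x + φ²) f`, `f_xy = (φ_y + φ (φ_x + φ²)) f` (using `f_y = f_xx`) and
`f_xxx = (φ_xx + φ_x φ + φ φ_x + (φ_x + φ²) φ) f`. Since `f_xy = f_yx = f_xxx` and `f` is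
invertible, the two coefficients agree, which is exactly `φ_y = φ_xx + 2 φ_x φ`.

The computation works in any Banach algebra, where inversion is smooth. The sup norm on matrices
is not submultiplicative, so the matrix case is transported along `Matrix.toEuclideanCLM` to the
Banach algebra of operators on Euclidean space.
-/

attribute [local instance] Matrix.normedAddCommGroup Matrix.normedSpace

/-- Partial derivative in the `x`-direction of a function of two real variables. -/
noncomputable def pdx {E : Type*} [NormedAddCommGroup E] [NormedSpace ℝ E]
    (f : ℝ × ℝ → E) : ℝ × ℝ → E :=
  fun p => fderiv ℝ f p (1, 0)

/-- Partial derivative in the `y`-direction of a function of two real variables. -/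
noncomputable def pdy {E : Type*} [NormedAddCommGroup E] [NormedSpace ℝ E]
    (f : ℝ × ℝ → E) : ℝ × ℝ → E :=
  fun p => fderiv ℝ f p (0, 1)

open scoped ContDiff

section NormedSpace

variable {E F : Type*} [NormedAddCommGroup E] [NormedSpace ℝ E]
  [NormedAddCommGroup F] [NormedSpace ℝ F] {f g : ℝ × ℝ → E} {m n : WithTop ℕ∞}

theorem ContDiff.pdx (hf : ContDiff ℝ n f) (hmn : m + 1 ≤ n) : ContDiff ℝ m (pdx f) :=
  (ContinuousLinearMap.apply ℝ E ((1, 0) : ℝ × ℝ)).contDiff.comp (hf.fderiv_right hmn)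

theorem pdy_pdx_eq_pdx_pdy {p : ℝ × ℝ} (hf : ContDiffAt ℝ 2 f p) :
    pdy (pdx f) p = pdx (pdy f) p := by
  have hdiff : DifferentiableAt ℝ (fderiv ℝ f) p :=
    (hf.fderiv_right (m := 1) le_rfl).differentiableAt one_ne_zero
  have hsecond : ∀ v w : ℝ × ℝ,
      fderiv ℝ (fun q => fderiv ℝ f q v) p w = fderiv ℝ (fderiv ℝ f) p w v := fun v w => by
    rw [fderiv_clm_apply hdiff (differentiableAt_const v)]
    simp
  change fderiv ℝ (fun q => fderiv ℝ f q (1, 0)) p (0, 1)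
    = fderiv ℝ (fun q => fderiv ℝ f q (0, 1)) p (1, 0)
  rw [hsecond, hsecond]
  exact hf.isSymmSndFDerivAt (by simp) _ _

theorem pdx_add {p : ℝ × ℝ} (hf : DifferentiableAt ℝ f p) (hg : DifferentiableAt ℝ g p) :
    pdx (fun q => f q + g q) p = pdx f p + pdx g p := by
  simp [_root_.pdx, fderiv_fun_add hf hg]

section LinearEquiv

variable {L : Type*} [EquivLike L E F] [LinearEquivClass L ℝ E F] [FiniteDimensional ℝ E]

theorem ContDiff.linearEquiv_comp {D : Type*} [NormedAddCommGroup D] [NormedSpace ℝ D]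
    {h : D → E} (e : L) (hh : ContDiff ℝ n h) : ContDiff ℝ n (fun x => e (h x)) :=
  (SemilinearEquivClass.semilinearEquiv e : E ≃ₗ[ℝ] F).toContinuousLinearEquiv.contDiff.comp hh

theorem fderiv_linearEquiv_comp_apply (e : L) (f : ℝ × ℝ → E) (p v : ℝ × ℝ) :
    fderiv ℝ (fun q => e (f q)) p v = e (fderiv ℝ f p v) :=
  congrArg (· v)
    ((SemilinearEquivClass.semilinearEquiv e : E ≃ₗ[ℝ] F).toContinuousLinearEquiv.comp_fderiv
      (f := f) (x := p))

theorem pdx_linearEquiv_comp (e : L) (f : ℝ × ℝ → E) :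
    pdx (fun q => e (f q)) = fun q => e (pdx f q) :=
  funext fun q => fderiv_linearEquiv_comp_apply e f q (1, 0)

theorem pdy_linearEquiv_comp (e : L) (f : ℝ × ℝ → E) :
    pdy (fun q => e (f q)) = fun q => e (pdy f q) :=
  funext fun q => fderiv_linearEquiv_comp_apply e f q (0, 1)

end LinearEquiv

end NormedSpace

section NormedAlgebra

variable {A : Type*} [NormedRing A] [NormedAlgebra ℝ A]

theorem ContDiff.ringInverse [CompleteSpace A] {E : Type*} [NormedAddCommGroup E]
    [NormedSpace ℝ E] {f : E → A} {n : WithTop ℕ∞} (hf : ContDiff ℝ n f)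
    (hunit : ∀ x, IsUnit (f x)) : ContDiff ℝ n (fun x => Ring.inverse (f x)) :=
  contDiff_iff_contDiffAt.mpr fun x =>
    (contDiffAt_ringInverse ℝ (hunit x).unit).comp x hf.contDiffAt

variable {f g φ : ℝ × ℝ → A}

theorem pdx_mul {p : ℝ × ℝ} (hf : DifferentiableAt ℝ f p) (hg : DifferentiableAt ℝ g p) :
    pdx (fun q => f q * g q) p = pdx f p * g p + f p * pdx g p := by
  simp [_root_.pdx, fderiv_fun_mul' hf hg, add_comm]

theorem pdy_mul {p : ℝ × ℝ} (hf : DifferentiableAt ℝ f p) (hg : DifferentiableAt ℝ g p) :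
    pdy (fun q => f q * g q) p = pdy f p * g p + f p * pdy g p := by
  simp [_root_.pdy, fderiv_fun_mul' hf hg, add_comm]

theorem contDiff_of_pdx_eq_mul [CompleteSpace A] (hf : ContDiff ℝ ∞ f)
    (hunit : ∀ p, IsUnit (f p)) (hφ : ∀ p, pdx f p = φ p * f p) : ContDiff ℝ ∞ φ := by
  have hφ_eq : φ = fun q => pdx f q * Ring.inverse (f q) := funext fun q => by
    rw [hφ, Ring.mul_inverse_cancel_right _ _ (hunit q)]
  exact hφ_eq ▸ (hf.pdx le_rfl).mul (hf.ringInverse hunit)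

theorem burgers_of_heat_of_pdx_eq_mul (hf : ContDiff ℝ ∞ f) (hφ_smooth : ContDiff ℝ ∞ φ)
    (hunit : ∀ p, IsUnit (f p)) (hheat : ∀ p, pdy f p = pdx (pdx f) p)
    (hφ : ∀ p, pdx f p = φ p * f p) (p : ℝ × ℝ) :
    pdy φ p = pdx (pdx φ) p + 2 • (pdx φ p * φ p) := by
  have df : Differentiable ℝ f := hf.differentiable (by simp)
  have dφ : Differentiable ℝ φ := hφ_smooth.differentiable (by simp)
  have dφx : Differentiable ℝ (pdx φ) := (hφ_smooth.pdx (m := ∞) le_rfl).differentiable (by simp)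
  have hfx : pdx f = fun q => φ q * f q := funext hφ
  have hfxx : ∀ q, pdx (pdx f) q = (pdx φ q + φ q * φ q) * f q := fun q => by
    rw [hfx, pdx_mul (dφ q) (df q), hφ q]
    noncomm_ring
  have hfxy : pdy (pdx f) p = (pdy φ p + φ p * (pdx φ p + φ p * φ p)) * f p := by
    rw [hfx, pdy_mul (dφ p) (df p), hheat p, hfxx p]
    noncomm_ring
  have hfxxx : pdx (pdx (pdx f)) p = (pdx (pdx φ) p + pdx φ p * φ p + φ p * pdx φ p
      + (pdx φ p + φ p * φ p) * φ p) * f p := by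
    have dφφ := (dφ p).fun_mul (dφ p)
    rw [funext hfxx, pdx_mul ((dφx p).fun_add dφφ) (df p), pdx_add (dφx p) dφφ,
      pdx_mul (dφ p) (dφ p), hφ p]
    noncomm_ring
  have hmixed : pdy (pdx f) p = pdx (pdx (pdx f)) p := by
    rw [pdy_pdx_eq_pdx_pdy (hf.contDiffAt.of_le ENat.LEInfty.out), funext hheat]
  have hcancel := (hunit p).mul_left_inj.mp (hfxy.symm.trans (hmixed.trans hfxxx))
  calc pdy φ p = (pdy φ p + φ p * (pdx φ p + φ p * φ p)) - φ p * (pdx φ p + φ p * φ p) := by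
        abel
    _ = pdx (pdx φ) p + 2 • (pdx φ p * φ p) := by
        rw [hcancel]
        noncomm_ring

end NormedAlgebra

/-- Cole–Hopf: a smooth invertible solution `f` of the matrix heat equation
`f_y = f_xx` gives a solution `φ = f_x f⁻¹` of the noncommutative Burgers
equation `φ_y = φ_xx + 2 φ_x φ`. -/
theorem burgers_of_heat (n : ℕ) (f : ℝ × ℝ → Matrix (Fin n) (Fin n) ℝ)
    (hf : ContDiff ℝ (⊤ : ℕ∞) f)
    (hinv : ∀ p, IsUnit (f p))
    (hheat : ∀ p, pdy f p = pdx (pdx f) p)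
    (φ : ℝ × ℝ → Matrix (Fin n) (Fin n) ℝ)
    (hφ : ∀ p, φ p = pdx f p * (f p)⁻¹) :
    ∀ p, pdy φ p = pdx (pdx φ) p + 2 • (pdx φ p * φ p) := by
  let e := Matrix.toEuclideanCLM (n := Fin n) (𝕜 := ℝ)
  have hfx : ∀ p, pdx f p = φ p * f p := fun p => by
    rw [hφ, Matrix.nonsing_inv_mul_cancel_right _ _ ((Matrix.isUnit_iff_isUnit_det _).mp (hinv p))]
  have hFx : ∀ p, pdx (fun q => e (f q)) p = e (φ p) * e (f p) := fun p => by
    simp only [pdx_linearEquiv_comp, hfx, map_mul]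
  have hF := hf.linearEquiv_comp e
  have key := burgers_of_heat_of_pdx_eq_mul hF
    (contDiff_of_pdx_eq_mul hF (fun p => (hinv p).map e) hFx) (fun p => (hinv p).map e)
    (fun p => by simp only [pdx_linearEquiv_comp, pdy_linearEquiv_comp, hheat]) hFx
  intro p
  apply EquivLike.injective e
  simpa only [map_add, map_nsmul, map_mul, pdx_linearEquiv_comp, pdy_linearEquiv_comp] using key p
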